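/- Let N ≥ 1 be an integer, d = 2N+1, μ > 0, t ∈ ℝ, let λ = (λ_{−N},…,λ_N) ∈ ℝ^{2N+1} be a fixed real vector and set Ω(k,ℓ,m,n) := λ_k − λ_ℓ + λ_m − λ_n. Let A : [−1,1] → ℂ be any function, let Ψ = (ψ_{jk})_{j,k ∈ {−N,…,N}} be Haar-distributed on U(2N+1), and define the first Duhamel iterate profile f¹_k(t) := −i (μ²/N) ∑_{ℓ,m,n = −N}^{N} (∫_0^t e^{i s Ω(k,ℓ,m,n)} ds) · γ(k,ℓ,m,n) · A(ℓ/N) · conj(A(m/N)) · A(n/N). Then for every k ∈ {−N,…,N}: Re( conj(A(k/N)) · E[ f¹_k(t) ] ) = 0. -/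

import Mathlib

/-!
Right multiplication of `Ψ` by a diagonal unitary `diag(u)` multiplies the quartic sum in
`γ(k,ℓ,m,n)` by the phase `conj(u_k) u_ℓ conj(u_m) u_n`. By uniqueness of the Haar probability
measure on the compact group `U(d)`, it is also right invariant; so `E γ(k,ℓ,m,n) = 0` unless
`(k,ℓ,m,n)` is a pairing (`k = ℓ, m = n` or `k = n, ℓ = m`), since otherwise some phase differs
from `1`. On a pairing `Ω = 0`, so the time integral is `t`, while `E γ` and
`conj(A_k) A_ℓ conj(A_m) A_n` are real. Hence `conj(A(k/N)) E[f¹_k(t)]` is `-i` times a real number.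
-/

open MeasureTheory

/-- The centered fourth-order eigenvector observable
`γ(k,ℓ,m,n) = ∑_j conj(ψ_{jk}) ψ_{jℓ} conj(ψ_{jm}) ψ_{jn} − (1/d)1_{k=ℓ,m=n} − (1/d)1_{k=n,ℓ=m}`. -/
noncomputable def gam {d : ℕ} (Ψ : Matrix (Fin d) (Fin d) ℂ) (k l m n : Fin d) : ℂ :=
  (∑ j, (starRingEnd ℂ) (Ψ j k) * Ψ j l * (starRingEnd ℂ) (Ψ j m) * Ψ j n) -
    (1 / (d : ℂ)) * (if k = l ∧ m = n then 1 else 0) -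
    (1 / (d : ℂ)) * (if k = n ∧ l = m then 1 else 0)

open ComplexConjugate

instance Matrix.unitaryGroup.instCompactSpace {n : Type*} [Fintype n] [DecidableEq n] :
    CompactSpace (Matrix.unitaryGroup n ℂ) :=
  isCompact_iff_compactSpace.mp <|
    (isCompact_univ_pi fun _ => isCompact_univ_pi fun _ => isCompact_closedBall (0 : ℂ) 1
      ).of_isClosed_subset (isClosed_unitary (R := Matrix n n ℂ)) fun _U hU i _ j _ => by
        simpa using entry_norm_bound_of_unitary hU i j

theorem Matrix.diagonal_mem_unitaryGroup {n α : Type*} [Fintype n] [DecidableEq n] [CommRing α]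
    [StarRing α] {v : n → α} (hv : ∀ i, star (v i) * v i = 1) :
    Matrix.diagonal v ∈ Matrix.unitaryGroup n α := by
  rw [Matrix.mem_unitaryGroup_iff', Matrix.star_eq_conjTranspose, Matrix.diagonal_conjTranspose,
    Matrix.diagonal_mul_diagonal, ← Matrix.diagonal_one]
  exact congrArg Matrix.diagonal (funext hv)

theorem MeasureTheory.Measure.isMulRightInvariant_of_compactSpace {G : Type*} [Group G]
    [TopologicalSpace G] [IsTopologicalGroup G] [CompactSpace G] [MeasurableSpace G]
    [BorelSpace G] (μ : Measure G) [IsProbabilityMeasure μ] [μ.IsMulLeftInvariant] :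
    μ.IsMulRightInvariant where
  map_mul_right_eq_self g := by
    have : μ.IsHaarMeasure := ⟨⟩
    have : (μ.map (· * g)).IsHaarMeasure := ⟨⟩
    have := Measure.isProbabilityMeasure_map (μ := μ) (measurable_mul_const g).aemeasurable
    exact Measure.isHaarMeasure_eq_of_isProbabilityMeasure _ _

theorem MeasureTheory.integral_eq_zero_of_mul_right_eq_smul {G E : Type*} [Group G]
    [MeasurableSpace G] [MeasurableMul G] [NormedAddCommGroup E] [NormedSpace ℂ E]
    (μ : Measure G) [μ.IsMulRightInvariant] {f : G → E} {g : G} {z : ℂ} (hz : z ≠ 1)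
    (hf : ∀ x, f (x * g) = z • f x) :
    ∫ x, f x ∂μ = 0 := by
  have hfix : z • ∫ x, f x ∂μ = ∫ x, f x ∂μ := by
    rw [← integral_smul]
    simp only [← hf]
    exact integral_mul_right_eq_self f g
  have hzero : (z - 1) • ∫ x, f x ∂μ = 0 := by rw [sub_smul, hfix, one_smul, sub_self]
  exact (smul_eq_zero.mp hzero).resolve_left (sub_ne_zero.mpr hz)

theorem conj_quartic_of_pairing {ι : Type*} (x : ι → ℂ) {k l m n : ι}
    (h : (k = l ∧ m = n) ∨ (k = n ∧ l = m)) :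
    conj (conj (x k) * x l * conj (x m) * x n) = conj (x k) * x l * conj (x m) * x n := by
  rcases h with ⟨rfl, rfl⟩ | ⟨rfl, rfl⟩ <;>
  · simp only [map_mul, Complex.conj_conj]
    ring

theorem exists_phase_ne_one {ι : Type*} [DecidableEq ι] {k l m n : ι}
    (h₁ : ¬(k = l ∧ m = n)) (h₂ : ¬(k = n ∧ l = m)) :
    ∃ p, let u := Function.update (1 : ι → ℂ) p Complex.I
      conj (u k) * u l * conj (u m) * u n ≠ 1 := by
  by_cases hkl : k = l
  · subst hkl
    have hmn : m ≠ n := fun h => h₁ ⟨rfl, h⟩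
    refine ⟨m, ?_⟩
    by_cases hkm : k = m <;> simp [hkm, hmn.symm, Complex.ext_iff]
  · by_cases hml : m = l
    · subst hml
      have hkn : k ≠ n := fun h => h₂ ⟨h, rfl⟩
      refine ⟨n, ?_⟩
      by_cases hmn : m = n <;> simp [hkn, hmn, Complex.ext_iff]
    · refine ⟨l, ?_⟩
      by_cases hnl : n = l
      · simp [hkl, hml, hnl, Complex.ext_iff]
        norm_num
      · simp [hkl, hml, hnl, Complex.ext_iff]

section gam

variable {d : ℕ}

theorem continuous_gam (k l m n : Fin d) :
    Continuous fun Ψ : Matrix (Fin d) (Fin d) ℂ => gam Ψ k l m n := by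
  unfold gam
  fun_prop

theorem gam_mul_diagonal (Ψ : Matrix (Fin d) (Fin d) ℂ) (u : Fin d → ℂ) {k l m n : Fin d}
    (h₁ : ¬(k = l ∧ m = n)) (h₂ : ¬(k = n ∧ l = m)) :
    gam (Ψ * Matrix.diagonal u) k l m n = conj (u k) * u l * conj (u m) * u n * gam Ψ k l m n := by
  simp only [gam, Matrix.mul_diagonal, h₁, h₂, if_false, mul_zero, sub_zero, Finset.mul_sum,
    map_mul]
  exact Finset.sum_congr rfl fun j _ => by ring

theorem conj_gam_of_pairing (Ψ : Matrix (Fin d) (Fin d) ℂ) {k l m n : Fin d}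
    (h : (k = l ∧ m = n) ∨ (k = n ∧ l = m)) :
    conj (gam Ψ k l m n) = gam Ψ k l m n := by
  simp only [gam, map_sub, map_sum, conj_quartic_of_pairing (Ψ _) h, map_mul, map_div₀, map_one,
    map_natCast, apply_ite conj, map_zero]

variable [MeasurableSpace (Matrix.unitaryGroup (Fin d) ℂ)]
  (P : Measure (Matrix.unitaryGroup (Fin d) ℂ))

theorem conj_integral_gam_of_pairing {k l m n : Fin d} (h : (k = l ∧ m = n) ∨ (k = n ∧ l = m)) :
    conj (∫ Ψ, gam Ψ.1 k l m n ∂P) = ∫ Ψ, gam Ψ.1 k l m n ∂P := by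
  rw [← integral_conj]
  simp only [conj_gam_of_pairing _ h]

variable [BorelSpace (Matrix.unitaryGroup (Fin d) ℂ)] [IsProbabilityMeasure P]

theorem integrable_gam (k l m n : Fin d) : Integrable (fun Ψ => gam Ψ.1 k l m n) P :=
  ((continuous_gam k l m n).comp continuous_subtype_val).integrable_of_hasCompactSupport
    (.of_compactSpace _)

theorem integral_gam_eq_zero [P.IsMulLeftInvariant] {k l m n : Fin d}
    (h₁ : ¬(k = l ∧ m = n)) (h₂ : ¬(k = n ∧ l = m)) :
    ∫ Ψ, gam Ψ.1 k l m n ∂P = 0 := by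
  have := P.isMulRightInvariant_of_compactSpace
  obtain ⟨p, hz⟩ := exists_phase_ne_one h₁ h₂
  set u := Function.update (1 : Fin d → ℂ) p Complex.I
  have hu : ∀ i, star (u i) * u i = 1 := fun i => by
    by_cases hi : i = p <;> simp [u, hi]
  exact integral_eq_zero_of_mul_right_eq_smul P hz (g := ⟨_, Matrix.diagonal_mem_unitaryGroup hu⟩)
    fun Ψ => gam_mul_diagonal Ψ.1 u h₁ h₂

theorem integral_sum_gam_mul (k : Fin d) (T : Fin d → Fin d → Fin d → ℂ) (a : Fin d → ℂ) :
    ∫ Ψ, ∑ l, ∑ m, ∑ n, T l m n * gam Ψ.1 k l m n * a l * conj (a m) * a n ∂P =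
      ∑ l, ∑ m, ∑ n, T l m n * (∫ Ψ, gam Ψ.1 k l m n ∂P) * a l * conj (a m) * a n := by
  have hterm : ∀ l m n, Integrable
      (fun Ψ => T l m n * gam Ψ.1 k l m n * a l * conj (a m) * a n) P := fun l m n =>
    ((((integrable_gam P k l m n).const_mul _).mul_const _).mul_const _).mul_const _
  rw [integral_finsetSum _ fun l _ => integrable_finsetSum _ fun m _ =>
    integrable_finsetSum _ fun n _ => hterm l m n]
  refine Finset.sum_congr rfl fun l _ => ?_
  rw [integral_finsetSum _ fun m _ => integrable_finsetSum _ fun n _ => hterm l m n]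
  refine Finset.sum_congr rfl fun m _ => ?_
  rw [integral_finsetSum _ fun n _ => hterm l m n]
  refine Finset.sum_congr rfl fun n _ => ?_
  rw [integral_mul_const, integral_mul_const, integral_mul_const, integral_const_mul]

theorem im_conj_mul_sum_integral_gam_eq_zero [P.IsMulLeftInvariant] (lam : Fin d → ℝ) (t : ℝ)
    (a : Fin d → ℂ) (k : Fin d) :
    (conj (a k) * ∑ l, ∑ m, ∑ n,
      (∫ s in (0 : ℝ)..t,
          Complex.exp (Complex.I * (s : ℂ) * ((lam k - lam l + lam m - lam n : ℝ) : ℂ))) *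
        (∫ Ψ, gam Ψ.1 k l m n ∂P) * a l * conj (a m) * a n).im = 0 := by
  simp only [Finset.mul_sum, Complex.im_sum]
  refine Finset.sum_eq_zero fun l _ => Finset.sum_eq_zero fun m _ =>
    Finset.sum_eq_zero fun n _ => ?_
  by_cases h : (k = l ∧ m = n) ∨ (k = n ∧ l = m)
  · have hΩ : lam k - lam l + lam m - lam n = 0 := by
      rcases h with ⟨rfl, rfl⟩ | ⟨rfl, rfl⟩ <;> ring
    have hT : ∫ s in (0 : ℝ)..t, Complex.exp (Complex.I * (s : ℂ) * ((0 : ℝ) : ℂ)) = t := by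
      simp
    rw [hΩ, hT]
    refine Complex.conj_eq_iff_im.mp ?_
    calc _ = conj (t * (∫ Ψ, gam Ψ.1 k l m n ∂P) * (conj (a k) * a l * conj (a m) * a n)) := by
          ring_nf
      _ = _ := by
          rw [map_mul, map_mul, conj_integral_gam_of_pairing P h, conj_quartic_of_pairing a h,
            Complex.conj_ofReal]
          ring
  · rw [not_or] at h
    simp [integral_gam_eq_zero P h.1 h.2]

end gam

theorem stmt19_general (N : ℕ) (μ : ℝ) (t : ℝ)
    (lam : Fin (2 * N + 1) → ℝ) (A : ℝ → ℂ)
    [MeasurableSpace (Matrix.unitaryGroup (Fin (2 * N + 1)) ℂ)]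
    [BorelSpace (Matrix.unitaryGroup (Fin (2 * N + 1)) ℂ)]
    (P : Measure (Matrix.unitaryGroup (Fin (2 * N + 1)) ℂ)) [IsProbabilityMeasure P]
    (hP : ∀ g : Matrix.unitaryGroup (Fin (2 * N + 1)) ℂ, P.map (fun x => g * x) = P)
    (k : Fin (2 * N + 1)) :
    ((starRingEnd ℂ) (A (((k : ℕ) - (N : ℝ)) / N)) *
      ∫ Ψ, (-Complex.I * ((μ ^ 2 / (N : ℝ) : ℝ) : ℂ) *
        ∑ l : Fin (2 * N + 1), ∑ m : Fin (2 * N + 1), ∑ n : Fin (2 * N + 1),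
          (∫ s in (0 : ℝ)..t,
            Complex.exp (Complex.I * (s : ℂ) *
              ((lam k - lam l + lam m - lam n : ℝ) : ℂ))) *
            gam Ψ.1 k l m n * A (((l : ℕ) - (N : ℝ)) / N) *
            (starRingEnd ℂ) (A (((m : ℕ) - (N : ℝ)) / N)) *
            A (((n : ℕ) - (N : ℝ)) / N)) ∂P).re = 0 := by
  have : P.IsMulLeftInvariant := ⟨hP⟩
  have him := im_conj_mul_sum_integral_gam_eq_zero P lam t
    (fun l => A (((l : ℕ) - (N : ℝ)) / N)) k
  beta_reduce at him
  rw [integral_const_mul, integral_sum_gam_mul, mul_left_comm, mul_comm (-Complex.I), mul_assoc,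
    Complex.re_ofReal_mul, neg_mul, Complex.neg_re, Complex.I_mul_re, neg_neg, him, mul_zero]

/-- The quartic (first Duhamel iterate) contribution to `E|a_k(t)|²` vanishes:
`Re(conj(A(k/N)) E[f¹_k(t)]) = 0`, where `f¹` is the first Duhamel iterate profile built from
the Haar eigenvector matrix `Ψ`, the eigenvalues `λ` and the data `A`. -/
theorem stmt19 (N : ℕ) (hN : 1 ≤ N) (μ : ℝ) (hμ : 0 < μ) (t : ℝ)
    (lam : Fin (2 * N + 1) → ℝ) (A : ℝ → ℂ)
    [MeasurableSpace (Matrix.unitaryGroup (Fin (2 * N + 1)) ℂ)]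
    [BorelSpace (Matrix.unitaryGroup (Fin (2 * N + 1)) ℂ)]
    (P : Measure (Matrix.unitaryGroup (Fin (2 * N + 1)) ℂ)) [IsProbabilityMeasure P]
    (hP : ∀ g : Matrix.unitaryGroup (Fin (2 * N + 1)) ℂ, P.map (fun x => g * x) = P)
    (k : Fin (2 * N + 1)) :
    ((starRingEnd ℂ) (A (((k : ℕ) - (N : ℝ)) / N)) *
      ∫ Ψ, (-Complex.I * ((μ ^ 2 / (N : ℝ) : ℝ) : ℂ) *
        ∑ l : Fin (2 * N + 1), ∑ m : Fin (2 * N + 1), ∑ n : Fin (2 * N + 1),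
          (∫ s in (0 : ℝ)..t,
            Complex.exp (Complex.I * (s : ℂ) *
              ((lam k - lam l + lam m - lam n : ℝ) : ℂ))) *
            gam Ψ.1 k l m n * A (((l : ℕ) - (N : ℝ)) / N) *
            (starRingEnd ℂ) (A (((m : ℕ) - (N : ℝ)) / N)) *
            A (((n : ℕ) - (N : ℝ)) / N)) ∂P).re = 0 :=
  stmt19_general N μ t lam A P hP k
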